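/- There exist constants A₁, A₂ > 0, depending only on n, δ, g, γ_D and the constants C_β, such that for every v = r v̂ with r = |v| ≥ 1, every t ∈ ℝ with |t| ≥ 1, and all ν₁, ν₂ ∈ [0,1]: ‖∇Ṽ^l_{|v|,t}‖_∞ ≤ A₁ (1+|v|^{ν₁/(2−ν₁)}|t|)^{−(γ_D+1/2)(2−ν₁)} + A₂ |v|^{ν₂/(2−ν₂)−1} (1+|v|^{ν₂/(2−ν₂)}|t|)^{−γ_D(2−ν₂)−1}. -/

import Mathlib

open scoped InnerProductSpace
open MeasureTheory Real Filter

noncomputable section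

/-- sup-norm of the gradient of `W` : `‖∇W‖_∞ = sup_x |∇W(x)|`. -/
noncomputable def gradSup {n : ℕ} (W : EuclideanSpace ℝ (Fin n) → ℝ) : ℝ :=
  ⨆ x, ‖fderiv ℝ W x‖

/-- sup-norm of the Laplacian of `W` : `‖ΔW‖_∞ = sup_x |ΔW(x)|`. -/
noncomputable def lapSup {n : ℕ} (W : EuclideanSpace ℝ (Fin n) → ℝ) : ℝ :=
  ⨆ x, |∑ j, fderiv ℝ (fun y => fderiv ℝ W y (EuclideanSpace.single j 1)) x
      (EuclideanSpace.single j 1)|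

/-- the cut-off translated potential
`Ṽ_{|v|,t}(x) = V(x + v t + e₁ t²/2) · g(x/(λ₁|v|⟨t⟩))`, with `v = r·v̂`. -/
noncomputable def cutV {n : ℕ} (V g : EuclideanSpace ℝ (Fin n) → ℝ)
    (lam : ℝ) (vhat e1 : EuclideanSpace ℝ (Fin n)) (r t : ℝ) :
    EuclideanSpace ℝ (Fin n) → ℝ :=
  fun x => V (x + (r * t) • vhat + (t ^ 2 / 2) • e1) *
    g ((lam * r * Real.sqrt (1 + t ^ 2))⁻¹ • x)

lemma opnorm_le_aux {n : ℕ} (f : EuclideanSpace ℝ (Fin n) →L[ℝ] ℝ) (C : ℝ) (hC : 0 ≤ C)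
    (h : ∀ j, |f (EuclideanSpace.single j 1)| ≤ C) : ‖f‖ ≤ Real.sqrt n * C := by
  apply ContinuousLinearMap.opNorm_le_bound _ (by positivity)
  intro x
  have hx : x = ∑ j, (x j) • EuclideanSpace.single j (1 : ℝ) := by
    have h0 := (EuclideanSpace.basisFun (Fin n) ℝ).toBasis.sum_repr x
    simp only [OrthonormalBasis.coe_toBasis_repr_apply, EuclideanSpace.basisFun_repr,
      OrthonormalBasis.coe_toBasis, EuclideanSpace.basisFun_apply] at h0
    exact h0.symm
  have h1 : f x = ∑ j, x j * f (EuclideanSpace.single j 1) := by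
    conv_lhs => rw [hx]
    rw [map_sum]
    simp [smul_eq_mul]
  have h2 : |f x| ≤ ∑ j, |x j| * C := by
    rw [h1]
    refine (Finset.abs_sum_le_sum_abs _ _).trans ?_
    apply Finset.sum_le_sum
    intro j _
    rw [abs_mul]
    exact mul_le_mul_of_nonneg_left (h j) (abs_nonneg _)
  have h3 : ∑ j : Fin n, |x j| ≤ Real.sqrt n * ‖x‖ := by
    have hcs := Finset.sum_mul_sq_le_sq_mul_sq Finset.univ (fun j : Fin n => |x j|) (fun _ => (1:ℝ))
    simp only [mul_one, one_pow] at hcs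
    have hnorm : ‖x‖ ^ 2 = ∑ j, |x j| ^ 2 := by
      rw [EuclideanSpace.norm_eq]
      rw [Real.sq_sqrt (by positivity)]
      simp [sq_abs]
    have hsum : (∑ j : Fin n, (1:ℝ)) = n := by simp
    have h4 : (∑ j : Fin n, |x j|) ^ 2 ≤ (Real.sqrt n * ‖x‖) ^ 2 := by
      rw [mul_pow, Real.sq_sqrt (Nat.cast_nonneg n), hnorm]
      calc (∑ j : Fin n, |x j|) ^ 2 ≤ (∑ j, |x j| ^ 2) * ∑ j : Fin n, (1:ℝ) := hcs
        _ = (n:ℝ) * ∑ j, |x j| ^ 2 := by rw [hsum, mul_comm]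
    calc ∑ j : Fin n, |x j| = Real.sqrt ((∑ j : Fin n, |x j|) ^ 2) :=
          (Real.sqrt_sq (by positivity)).symm
      _ ≤ Real.sqrt ((Real.sqrt n * ‖x‖) ^ 2) := Real.sqrt_le_sqrt h4
      _ = Real.sqrt n * ‖x‖ := Real.sqrt_sq (by positivity)
  calc |f x| ≤ ∑ j, |x j| * C := h2
    _ = (∑ j : Fin n, |x j|) * C := by rw [Finset.sum_mul]
    _ ≤ (Real.sqrt n * ‖x‖) * C := mul_le_mul_of_nonneg_right h3 hC
    _ = Real.sqrt n * C * ‖x‖ := by ring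

lemma key_ineq (r t ν : ℝ) (hr : 1 ≤ r) (ht : 1 ≤ |t|) (hν0 : 0 ≤ ν) (hν1 : ν ≤ 1) :
    (1 + r ^ (ν / (2 - ν)) * |t|) ^ (2 - ν) ≤ 4 * (r * |t| + t ^ 2) := by
  have h2ν : (0:ℝ) < 2 - ν := by linarith
  set a := ν / (2 - ν) with ha
  have ha0 : 0 ≤ a := div_nonneg hν0 h2ν.le
  have hr0 : (0:ℝ) < r := lt_of_lt_of_le one_pos hr
  have ht0 : (0:ℝ) < |t| := lt_of_lt_of_le one_pos ht
  have hra : 1 ≤ r ^ a := Real.one_le_rpow hr ha0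
  have hX1 : 1 ≤ r ^ a * |t| := by nlinarith
  have hstep1 : (1 + r ^ a * |t|) ^ (2 - ν) ≤ (2 * (r ^ a * |t|)) ^ (2 - ν) := by
    apply Real.rpow_le_rpow (by linarith) (by linarith) h2ν.le
  have hexp : a * (2 - ν) = ν := div_mul_cancel₀ ν h2ν.ne'
  have hstep2 : (2 * (r ^ a * |t|)) ^ (2 - ν) = 2 ^ (2 - ν) * (r ^ ν * |t| ^ (2 - ν)) := by
    rw [Real.mul_rpow (by norm_num) (by positivity),
      Real.mul_rpow (by positivity) (by positivity),
      ← Real.rpow_mul hr0.le, hexp]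
  have h24 : (2:ℝ) ^ (2 - ν) ≤ 4 := by
    calc (2:ℝ) ^ (2 - ν) ≤ 2 ^ (2:ℝ) := by
          apply Real.rpow_le_rpow_of_exponent_le (by norm_num) (by linarith)
      _ = 4 := by
          rw [show (2:ℝ) = ((2:ℕ):ℝ) from by norm_num, Real.rpow_natCast]; norm_num
  have hgm : r ^ ν * |t| ^ (2 - ν) ≤ r * |t| + t ^ 2 := by
    have h2' : ((t:ℝ) ^ 2) ^ ((1:ℝ) - ν) = |t| ^ (2 - 2 * ν) := by
      rw [← sq_abs t, ← Real.rpow_natCast |t| 2, ← Real.rpow_mul (abs_nonneg t)]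
      norm_num
      ring_nf
    have heq : r ^ ν * |t| ^ (2 - ν) = (r * |t|) ^ ν * (t ^ 2) ^ (1 - ν) := by
      rw [Real.mul_rpow hr0.le ht0.le, h2', mul_assoc, ← Real.rpow_add ht0]
      congr 1
      ring
    rw [heq]
    calc (r * |t|) ^ ν * (t ^ 2) ^ (1 - ν) ≤ ν * (r * |t|) + (1 - ν) * t ^ 2 :=
          Real.geom_mean_le_arith_mean2_weighted hν0 (by linarith) (by positivity)
            (by positivity) (by ring)
      _ ≤ r * |t| + t ^ 2 := by nlinarith [mul_pos hr0 ht0, sq_nonneg t]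
  calc (1 + r ^ a * |t|) ^ (2 - ν) ≤ (2 * (r ^ a * |t|)) ^ (2 - ν) := hstep1
    _ = 2 ^ (2 - ν) * (r ^ ν * |t| ^ (2 - ν)) := hstep2
    _ ≤ 4 * (r * |t| + t ^ 2) := by
        apply mul_le_mul h24 hgm (by positivity) (by norm_num)

lemma key_ineq2 (r t ν q : ℝ) (hr : 1 ≤ r) (ht : 1 ≤ |t|) (hν0 : 0 ≤ ν) (hν1 : ν ≤ 1)
    (hq : 0 ≤ q) :
    (r * |t| + t ^ 2) ^ (-q) ≤ 4 ^ q * (1 + r ^ (ν / (2 - ν)) * |t|) ^ (-(q * (2 - ν))) := by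
  have h2ν : (0:ℝ) < 2 - ν := by linarith
  have hr0 : (0:ℝ) < r := lt_of_lt_of_le one_pos hr
  have ht0 : (0:ℝ) < |t| := lt_of_lt_of_le one_pos ht
  set X := 1 + r ^ (ν / (2 - ν)) * |t| with hX
  have hX0 : 0 < X := by
    rw [hX]
    positivity
  have hkey := key_ineq r t ν hr ht hν0 hν1
  have hXp : 0 < X ^ (2 - ν) := Real.rpow_pos_of_pos hX0 _
  have h1 : X ^ (2 - ν) / 4 ≤ r * |t| + t ^ 2 := by linarith
  have h2 : (r * |t| + t ^ 2) ^ (-q) ≤ (X ^ (2 - ν) / 4) ^ (-q) :=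
    Real.rpow_le_rpow_of_nonpos (by positivity) h1 (by linarith)
  calc (r * |t| + t ^ 2) ^ (-q) ≤ (X ^ (2 - ν) / 4) ^ (-q) := h2
    _ = 4 ^ q * X ^ (-(q * (2 - ν))) := by
        rw [Real.div_rpow hXp.le (by norm_num), ← Real.rpow_mul hX0.le,
          Real.rpow_neg (by norm_num : (0:ℝ) ≤ 4), div_inv_eq_mul,
          show (2 - ν) * (-q) = -(q * (2 - ν)) from by ring, mul_comm]
    _ = 4 ^ q * (1 + r ^ (ν / (2 - ν)) * |t|) ^ (-(q * (2 - ν))) := rfl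

lemma arith1 (d u m s : ℝ) (hd0 : 0 ≤ d) (hd1 : d ≤ 1) (hs2 : s ^ 2 = (1 - d) / 2)
    (hu : 0 ≤ u) (hm : 0 ≤ m) :
    (s * (u + m / 2)) ^ 2 ≤ u ^ 2 - d * (u * m) + (m / 2) ^ 2 := by
  nlinarith [sq_nonneg (u - m / 2)]

lemma arith2 (s u m : ℝ) (hs0 : 0 < s) (hs1 : s ≤ 1) (hu : 0 ≤ u) (hm : 0 ≤ m) :
    s / 2 * (u + m) ≤ s * (u + m / 2) - s ^ 2 / 2 * u := by
  nlinarith [mul_nonneg (mul_nonneg hs0.le hu) (sub_nonneg.mpr hs1)]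

set_option maxHeartbeats 1000000 in
theorem stmt_8 (n : ℕ) (hn : 2 ≤ n)
    (e1 : EuclideanSpace ℝ (Fin n))
    (he1 : e1 = EuclideanSpace.single ⟨0, by omega⟩ (1 : ℝ))
    (vhat : EuclideanSpace ℝ (Fin n)) (hvhat : ‖vhat‖ = 1)
    (δ : ℝ) (hδ : δ = |⟪vhat, e1⟫_ℝ|) (hδ1 : δ < 1)
    (lam : ℝ) (hlam : lam = (1 - δ) / (16 * Real.sqrt 2))
    (g : EuclideanSpace ℝ (Fin n) → ℝ) (hg : ContDiff ℝ (⊤ : ℕ∞) g)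
    (hg0 : ∀ y, 0 ≤ g y) (hg1 : ∀ y, g y ≤ 1)
    (hg3 : ∀ y, ‖y‖ ≤ 3 → g y = 1) (hg4 : ∀ y, 4 ≤ ‖y‖ → g y = 0)
    (Vl : EuclideanSpace ℝ (Fin n) → ℝ) (hVl : ContDiff ℝ 2 Vl)
    (C0 C1 C2 γD : ℝ) (hC0 : 0 < C0) (hC1 : 0 < C1) (hC2 : 0 < C2)
    (hγD : 1 / 4 < γD) (hγD' : γD < 1 / 2)
    (hVb : ∀ x, |Vl x| ≤ C0 * Real.sqrt (1 + ‖x‖ ^ 2) ^ (-γD))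
    (hVd1 : ∀ x, ∀ j : Fin n,
      |fderiv ℝ Vl x (EuclideanSpace.single j 1)| ≤
        C1 * Real.sqrt (1 + ‖x‖ ^ 2) ^ (-γD - 1 / 2))
    (hVd2 : ∀ x, ∀ j k : Fin n,
      |fderiv ℝ (fun y => fderiv ℝ Vl y (EuclideanSpace.single k 1)) x
          (EuclideanSpace.single j 1)| ≤
        C2 * Real.sqrt (1 + ‖x‖ ^ 2) ^ (-γD - 1)) :
    ∃ A1 > (0 : ℝ), ∃ A2 > (0 : ℝ), ∀ r : ℝ, 1 ≤ r → ∀ t : ℝ, 1 ≤ |t| →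
      ∀ ν1 ∈ Set.Icc (0 : ℝ) 1, ∀ ν2 ∈ Set.Icc (0 : ℝ) 1,
        gradSup (cutV Vl g lam vhat e1 r t) ≤
          A1 * (1 + r ^ (ν1 / (2 - ν1)) * |t|) ^ (-((γD + 1 / 2) * (2 - ν1))) +
          A2 * r ^ (ν2 / (2 - ν2) - 1) *
            (1 + r ^ (ν2 / (2 - ν2)) * |t|) ^ (-(γD * (2 - ν2)) - 1) := by
  classical
  have hδ0 : 0 ≤ δ := hδ ▸ abs_nonneg _
  have hlam0 : 0 < lam := by
    rw [hlam]
    have h2 : (0:ℝ) < Real.sqrt 2 := by positivity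
    apply div_pos (by linarith) (by positivity)
  set s : ℝ := Real.sqrt ((1 - δ) / 2) with hs
  have hs0 : 0 < s := Real.sqrt_pos.mpr (by linarith)
  have hs2 : s ^ 2 = (1 - δ) / 2 := Real.sq_sqrt (by linarith)
  have hs1 : s ≤ 1 := by nlinarith
  set c0 : ℝ := s / 2 with hc0def
  have hc0 : 0 < c0 := by positivity
  -- bound on the gradient of g
  have hgsupp : HasCompactSupport g := by
    apply HasCompactSupport.intro (isCompact_closedBall (0 : EuclideanSpace ℝ (Fin n)) 4)
    intro y hy
    apply hg4
    simp only [Metric.mem_closedBall, dist_zero_right, not_le] at hy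
    linarith
  have hgc : Continuous (fderiv ℝ g) := hg.continuous_fderiv (by simp)
  obtain ⟨Mg0, hMg0⟩ := (hgsupp.fderiv (𝕜 := ℝ)).exists_bound_of_continuous hgc
  set M : ℝ := |Mg0| + 1 with hM
  have hM0 : 0 < M := by positivity
  have hMg : ∀ y, ‖fderiv ℝ g y‖ ≤ M := fun y =>
    (hMg0 y).trans (by rw [hM]; cases abs_cases Mg0 with
      | inl h => linarith [h.1]
      | inr h => linarith [h.1, abs_nonneg Mg0])
  have hn0 : (0:ℝ) < (n:ℝ) := by exact_mod_cast (by omega : 0 < n)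
  have hsqn : 0 < Real.sqrt n := Real.sqrt_pos.mpr hn0
  have h4c0 : (0:ℝ) < 4 / c0 := by positivity
  refine ⟨Real.sqrt n * C1 * (4 / c0) ^ (γD + 1 / 2), by positivity,
    C0 * M * (4 / c0) ^ γD * 2 / lam, by positivity, ?_⟩
  intro r hr t ht ν1 hν1 ν2 hν2
  have hr0 : (0:ℝ) < r := lt_of_lt_of_le one_pos hr
  have ht0 : (0:ℝ) < |t| := lt_of_lt_of_le one_pos ht
  have ht2 : (1:ℝ) ≤ t ^ 2 := by nlinarith [sq_abs t, ht]
  have hsq2 : (0:ℝ) < Real.sqrt (1 + t ^ 2) := Real.sqrt_pos.mpr (by positivity)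
  set c : ℝ := lam * r * Real.sqrt (1 + t ^ 2) with hcdef
  have hcpos : 0 < c := by positivity
  set w : EuclideanSpace ℝ (Fin n) := (r * t) • vhat + (t ^ 2 / 2) • e1 with hw
  set P : ℝ := r * |t| + t ^ 2 with hP
  have hPpos : 0 < P := by positivity
  have he1n : ‖e1‖ = 1 := by rw [he1, EuclideanSpace.norm_single]; norm_num
  -- lower bound on ‖w‖
  have hwlow : s * (r * |t| + t ^ 2 / 2) ≤ ‖w‖ := by
    have hin : ⟪(r * t) • vhat, (t ^ 2 / 2) • e1⟫_ℝ =
        (r * t) * (t ^ 2 / 2) * ⟪vhat, e1⟫_ℝ := by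
      rw [real_inner_smul_left, real_inner_smul_right]; ring
    have hnw : ‖w‖ ^ 2 = (r * t) ^ 2 + 2 * ((r * t) * (t ^ 2 / 2) * ⟪vhat, e1⟫_ℝ)
        + (t ^ 2 / 2) ^ 2 := by
      rw [hw, norm_add_sq_real, hin, norm_smul, norm_smul, hvhat, he1n]
      simp only [Real.norm_eq_abs, mul_one]
      rw [sq_abs, sq_abs]
    have hip : |⟪vhat, e1⟫_ℝ| = δ := hδ.symm
    have hq2 : (0:ℝ) ≤ t ^ 2 / 2 := by positivity
    have ha : |(r * t) * (t ^ 2 / 2) * ⟪vhat, e1⟫_ℝ| = δ * (r * |t| * (t ^ 2 / 2)) := by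
      rw [abs_mul, abs_mul, hip, abs_mul, abs_of_pos hr0, abs_of_nonneg hq2]
      ring
    have h2 : -(δ * (r * |t| * (t ^ 2 / 2))) ≤ (r * t) * (t ^ 2 / 2) * ⟪vhat, e1⟫_ℝ := by
      have := neg_abs_le ((r * t) * (t ^ 2 / 2) * ⟪vhat, e1⟫_ℝ)
      rw [ha] at this
      exact this
    have h1 : (r * t) ^ 2 = (r * |t|) ^ 2 := by rw [mul_pow, mul_pow, sq_abs]
    have harith := arith1 δ (r * |t|) (t ^ 2) s hδ0 hδ1.le hs2 (by positivity) (sq_nonneg t)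
    have hsq : (s * (r * |t| + t ^ 2 / 2)) ^ 2 ≤ ‖w‖ ^ 2 := by
      rw [hnw, h1]
      linarith
    have ha0 : 0 ≤ s * (r * |t| + t ^ 2 / 2) := by positivity
    calc s * (r * |t| + t ^ 2 / 2) = Real.sqrt ((s * (r * |t| + t ^ 2 / 2)) ^ 2) :=
          (Real.sqrt_sq ha0).symm
      _ ≤ Real.sqrt (‖w‖ ^ 2) := Real.sqrt_le_sqrt hsq
      _ = ‖w‖ := Real.sqrt_sq (norm_nonneg w)
  -- geometric lower bound on the shifted argument
  have hgeom : ∀ x : EuclideanSpace ℝ (Fin n), ‖x‖ ≤ 4 * c →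
      c0 * P ≤ Real.sqrt (1 + ‖x + w‖ ^ 2) := by
    intro x hx
    have hsqrt2 : Real.sqrt (1 + t ^ 2) ≤ Real.sqrt 2 * |t| := by
      rw [show Real.sqrt 2 * |t| = Real.sqrt (2 * t ^ 2) from ?_]
      · apply Real.sqrt_le_sqrt
        linarith
      · rw [Real.sqrt_mul (by norm_num), ← sq_abs t, Real.sqrt_sq (abs_nonneg t)]
    have hsqrt2' : (0:ℝ) < Real.sqrt 2 := by positivity
    have hss : Real.sqrt 2 * Real.sqrt 2 = 2 := Real.mul_self_sqrt (by norm_num)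
    have hc4 : 4 * c ≤ (1 - δ) / 4 * (r * |t|) := by
      rw [hcdef, hlam]
      have : (1 - δ) / (16 * Real.sqrt 2) * r * Real.sqrt (1 + t ^ 2) ≤
          (1 - δ) / (16 * Real.sqrt 2) * r * (Real.sqrt 2 * |t|) := by
        apply mul_le_mul_of_nonneg_left hsqrt2
        exact mul_nonneg (div_nonneg (by linarith) (by positivity)) hr0.le
      calc 4 * ((1 - δ) / (16 * Real.sqrt 2) * r * Real.sqrt (1 + t ^ 2)) ≤
          4 * ((1 - δ) / (16 * Real.sqrt 2) * r * (Real.sqrt 2 * |t|)) := by linarith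
        _ = (1 - δ) / 4 * (r * |t|) * (Real.sqrt 2 * Real.sqrt 2 / 2) := by
            field_simp
            ring_nf
            rw [Real.sq_sqrt (by norm_num : (0:ℝ) ≤ 2)]
            ring
        _ = (1 - δ) / 4 * (r * |t|) := by rw [hss]; ring
    have hxw : ‖w‖ - ‖x‖ ≤ ‖x + w‖ := by
      have h := norm_sub_le (x + w) x
      have h2 : x + w - x = w := by abel
      rw [h2] at h
      linarith
    have hdelta : (1 - δ) / 4 = s ^ 2 / 2 := by rw [hs2]; ring
    have hlow : c0 * P ≤ ‖x + w‖ := by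
      rw [hc0def, hP]
      have h1 : ‖x‖ ≤ s ^ 2 / 2 * (r * |t|) := by
        rw [← hdelta]; linarith
      have h2 := arith2 s (r * |t|) (t ^ 2) hs0 hs1 (by positivity) (sq_nonneg t)
      linarith
    calc c0 * P ≤ ‖x + w‖ := hlow
      _ = Real.sqrt (‖x + w‖ ^ 2) := (Real.sqrt_sq (norm_nonneg _)).symm
      _ ≤ Real.sqrt (1 + ‖x + w‖ ^ 2) := Real.sqrt_le_sqrt (by linarith)
  -- differentiability setup
  have hVdiff : Differentiable ℝ Vl := hVl.differentiable (by norm_num)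
  have hgdiff : Differentiable ℝ g := hg.differentiable (by simp)
  set L : EuclideanSpace ℝ (Fin n) →L[ℝ] EuclideanSpace ℝ (Fin n) :=
    c⁻¹ • ContinuousLinearMap.id ℝ _ with hL
  have hLx : ∀ x : EuclideanSpace ℝ (Fin n), L x = c⁻¹ • x := fun x => rfl
  have hcut : cutV Vl g lam vhat e1 r t = fun x => Vl (x + w) * g (L x) := by
    funext x
    rw [cutV, hLx, hw, ← hcdef, add_assoc]
  have hF1 : ∀ x : EuclideanSpace ℝ (Fin n), HasFDerivAt (fun y => Vl (y + w))
      ((fderiv ℝ Vl (x + w)).comp (ContinuousLinearMap.id ℝ _)) x := fun x =>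
    (hVdiff (x + w)).hasFDerivAt.comp x ((hasFDerivAt_id x).add_const w)
  have hF2 : ∀ x : EuclideanSpace ℝ (Fin n), HasFDerivAt (fun y => g (L y))
      ((fderiv ℝ g (L x)).comp L) x := fun x =>
    (hgdiff (L x)).hasFDerivAt.comp x L.hasFDerivAt
  have hfd : ∀ x : EuclideanSpace ℝ (Fin n),
      fderiv ℝ (fun y => Vl (y + w) * g (L y)) x =
        Vl (x + w) • ((fderiv ℝ g (L x)).comp L) +
        g (L x) • ((fderiv ℝ Vl (x + w)).comp (ContinuousLinearMap.id ℝ _)) := fun x =>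
    ((hF1 x).mul (hF2 x)).fderiv
  -- positivity of the RHS
  have haX1 : (0:ℝ) ≤ r ^ (ν1 / (2 - ν1)) * |t| :=
    mul_nonneg (Real.rpow_nonneg hr0.le _) (abs_nonneg t)
  have haX2 : (0:ℝ) ≤ r ^ (ν2 / (2 - ν2)) * |t| :=
    mul_nonneg (Real.rpow_nonneg hr0.le _) (abs_nonneg t)
  have hX1pos : (0:ℝ) < 1 + r ^ (ν1 / (2 - ν1)) * |t| := by linarith
  have hX2pos : (0:ℝ) < 1 + r ^ (ν2 / (2 - ν2)) * |t| := by linarith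
  have hRHS1pos : (0:ℝ) < Real.sqrt n * C1 * (4 / c0) ^ (γD + 1 / 2) *
      (1 + r ^ (ν1 / (2 - ν1)) * |t|) ^ (-((γD + 1 / 2) * (2 - ν1))) := by
    have := Real.rpow_pos_of_pos hX1pos (-((γD + 1 / 2) * (2 - ν1)))
    positivity
  have hRHS2pos : (0:ℝ) < C0 * M * (4 / c0) ^ γD * 2 / lam * r ^ (ν2 / (2 - ν2) - 1) *
      (1 + r ^ (ν2 / (2 - ν2)) * |t|) ^ (-(γD * (2 - ν2)) - 1) := by
    have h1 := Real.rpow_pos_of_pos hX2pos (-(γD * (2 - ν2)) - 1)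
    have h2 := Real.rpow_pos_of_pos hr0 (ν2 / (2 - ν2) - 1)
    positivity
  -- pointwise bound
  have hkey : ∀ x : EuclideanSpace ℝ (Fin n),
      ‖fderiv ℝ (cutV Vl g lam vhat e1 r t) x‖ ≤
        Real.sqrt n * C1 * (4 / c0) ^ (γD + 1 / 2) *
          (1 + r ^ (ν1 / (2 - ν1)) * |t|) ^ (-((γD + 1 / 2) * (2 - ν1))) +
        C0 * M * (4 / c0) ^ γD * 2 / lam * r ^ (ν2 / (2 - ν2) - 1) *
          (1 + r ^ (ν2 / (2 - ν2)) * |t|) ^ (-(γD * (2 - ν2)) - 1) := by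
    intro x
    rw [hcut, hfd x]
    rcases le_or_gt ‖L x‖ 4 with hx4 | hx4
    · -- main case : inside the cut-off
      have hxb : ‖x‖ ≤ 4 * c := by
        have : ‖L x‖ = c⁻¹ * ‖x‖ := by
          rw [hLx, norm_smul, Real.norm_eq_abs, abs_of_pos (inv_pos.mpr hcpos)]
        rw [this] at hx4
        calc ‖x‖ = c * (c⁻¹ * ‖x‖) := by field_simp
          _ ≤ c * 4 := mul_le_mul_of_nonneg_left hx4 hcpos.le
          _ = 4 * c := by ring
      set D : ℝ := Real.sqrt (1 + ‖x + w‖ ^ 2) with hD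
      have hDlow : c0 * P ≤ D := hgeom x hxb
      have hDpos : 0 < D := lt_of_lt_of_le (by positivity) hDlow
      -- first term
      have hb1 : ‖fderiv ℝ Vl (x + w)‖ ≤ Real.sqrt n * (C1 * D ^ (-γD - 1 / 2)) := by
        apply opnorm_le_aux _ _ ?_ (hVd1 (x + w))
        have := Real.rpow_nonneg (Real.sqrt_nonneg (1 + ‖x + w‖ ^ 2)) (-γD - 1 / 2)
        positivity
      have hb2 : D ^ (-γD - 1 / 2) ≤ (c0 * P) ^ (-(γD + 1 / 2)) := by
        rw [show -γD - 1 / 2 = -(γD + 1 / 2) from by ring]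
        exact Real.rpow_le_rpow_of_nonpos (by positivity) hDlow (by linarith)
      have hb3 : (c0 * P) ^ (-(γD + 1 / 2)) ≤
          (4 / c0) ^ (γD + 1 / 2) *
          (1 + r ^ (ν1 / (2 - ν1)) * |t|) ^ (-((γD + 1 / 2) * (2 - ν1))) := by
        rw [Real.mul_rpow hc0.le hPpos.le]
        have hk := key_ineq2 r t ν1 (γD + 1 / 2) hr ht hν1.1 hν1.2 (by linarith)
        rw [← hP] at hk
        calc c0 ^ (-(γD + 1 / 2)) * P ^ (-(γD + 1 / 2)) ≤
            c0 ^ (-(γD + 1 / 2)) *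
              (4 ^ (γD + 1 / 2) *
                (1 + r ^ (ν1 / (2 - ν1)) * |t|) ^ (-((γD + 1 / 2) * (2 - ν1)))) := by
              apply mul_le_mul_of_nonneg_left hk (Real.rpow_nonneg hc0.le _)
          _ = (4 / c0) ^ (γD + 1 / 2) *
              (1 + r ^ (ν1 / (2 - ν1)) * |t|) ^ (-((γD + 1 / 2) * (2 - ν1))) := by
              rw [Real.div_rpow (by norm_num) hc0.le, Real.rpow_neg hc0.le,
                div_eq_mul_inv]
              ring
      -- second term bounds
      have hVbnd : |Vl (x + w)| ≤ C0 * D ^ (-γD) := hVb (x + w)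
      have hb4 : D ^ (-γD) ≤ (c0 * P) ^ (-γD) :=
        Real.rpow_le_rpow_of_nonpos (by positivity) hDlow (by linarith)
      have hb5 : (c0 * P) ^ (-γD) ≤
          (4 / c0) ^ γD * (1 + r ^ (ν2 / (2 - ν2)) * |t|) ^ (-(γD * (2 - ν2))) := by
        rw [Real.mul_rpow hc0.le hPpos.le]
        have hk := key_ineq2 r t ν2 γD hr ht hν2.1 hν2.2 (by linarith)
        rw [← hP] at hk
        calc c0 ^ (-γD) * P ^ (-γD) ≤
            c0 ^ (-γD) *
              (4 ^ γD * (1 + r ^ (ν2 / (2 - ν2)) * |t|) ^ (-(γD * (2 - ν2)))) := by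
              apply mul_le_mul_of_nonneg_left hk (Real.rpow_nonneg hc0.le _)
          _ = (4 / c0) ^ γD * (1 + r ^ (ν2 / (2 - ν2)) * |t|) ^ (-(γD * (2 - ν2))) := by
              rw [Real.div_rpow (by norm_num) hc0.le, Real.rpow_neg hc0.le,
                div_eq_mul_inv]
              ring
      have hLnorm : ‖L‖ ≤ c⁻¹ := by
        apply ContinuousLinearMap.opNorm_le_bound _ (inv_nonneg.mpr hcpos.le)
        intro y
        rw [hLx, norm_smul, Real.norm_eq_abs, abs_of_pos (inv_pos.mpr hcpos)]
      have hb6 : ‖(fderiv ℝ g (L x)).comp L‖ ≤ M * c⁻¹ := by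
        calc ‖(fderiv ℝ g (L x)).comp L‖ ≤ ‖fderiv ℝ g (L x)‖ * ‖L‖ :=
              ContinuousLinearMap.opNorm_comp_le _ _
          _ ≤ M * c⁻¹ := mul_le_mul (hMg _) hLnorm (norm_nonneg _) hM0.le
      -- the inverse factor
      set b : ℝ := ν2 / (2 - ν2) with hb
      have h2ν2 : (0:ℝ) < 2 - ν2 := by have := hν2.2; linarith
      have hrb : 1 ≤ r ^ b := Real.one_le_rpow hr (div_nonneg hν2.1 h2ν2.le)
      have hsq1 : (1:ℝ) ≤ Real.sqrt (1 + t ^ 2) := by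
        have h := Real.sqrt_le_sqrt (show (1:ℝ) ≤ 1 + t ^ 2 by linarith)
        rwa [Real.sqrt_one] at h
      have htle : |t| ≤ Real.sqrt (1 + t ^ 2) := by
        rw [show |t| = Real.sqrt (t ^ 2) from by rw [← sq_abs t, Real.sqrt_sq (abs_nonneg t)]]
        exact Real.sqrt_le_sqrt (by linarith)
      have h1X2 : 1 + r ^ b * |t| ≤ 2 * r ^ b * Real.sqrt (1 + t ^ 2) := by
        have h1 : (1:ℝ) ≤ r ^ b * Real.sqrt (1 + t ^ 2) := by
          have := mul_le_mul hrb hsq1 zero_le_one (le_trans zero_le_one hrb)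
          simpa using this
        have h2 : r ^ b * |t| ≤ r ^ b * Real.sqrt (1 + t ^ 2) :=
          mul_le_mul_of_nonneg_left htle (by linarith)
        linarith
      have hrtinv : (r * Real.sqrt (1 + t ^ 2))⁻¹ ≤
          2 * r ^ (b - 1) * (1 + r ^ b * |t|)⁻¹ := by
        have hq : (0:ℝ) < r * Real.sqrt (1 + t ^ 2) := by positivity
        have hXp : (0:ℝ) < 1 + r ^ b * |t| := hX2pos
        rw [show (r * Real.sqrt (1 + t ^ 2))⁻¹ = 1 / (r * Real.sqrt (1 + t ^ 2)) from
          (one_div _).symm,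
          show 2 * r ^ (b - 1) * (1 + r ^ b * |t|)⁻¹ =
            (2 * r ^ (b - 1)) / (1 + r ^ b * |t|) from by rw [div_eq_mul_inv],
          div_le_div_iff₀ hq hXp]
        have hr1 : r ^ (b - 1) = r ^ b / r := by
          rw [Real.rpow_sub hr0, Real.rpow_one]
        rw [hr1]
        calc 1 * (1 + r ^ b * |t|) = 1 + r ^ b * |t| := one_mul _
          _ ≤ 2 * r ^ b * Real.sqrt (1 + t ^ 2) := h1X2
          _ = 2 * (r ^ b / r) * (r * Real.sqrt (1 + t ^ 2)) := by
              field_simp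
      have hcinv : c⁻¹ = lam⁻¹ * (r * Real.sqrt (1 + t ^ 2))⁻¹ := by
        rw [hcdef, mul_assoc, mul_inv]
      -- assemble
      have hterm1 : |g (L x)| *
          ‖(fderiv ℝ Vl (x + w)).comp (ContinuousLinearMap.id ℝ (EuclideanSpace ℝ (Fin n)))‖ ≤
          Real.sqrt n * C1 * (4 / c0) ^ (γD + 1 / 2) *
            (1 + r ^ (ν1 / (2 - ν1)) * |t|) ^ (-((γD + 1 / 2) * (2 - ν1))) := by
        rw [ContinuousLinearMap.comp_id]
        have hgle : |g (L x)| ≤ 1 := abs_le.mpr ⟨by linarith [hg0 (L x)], hg1 (L x)⟩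
        calc |g (L x)| * ‖fderiv ℝ Vl (x + w)‖ ≤ 1 * (Real.sqrt n * (C1 * D ^ (-γD - 1 / 2))) :=
              mul_le_mul hgle hb1 (norm_nonneg _) (by norm_num)
          _ = Real.sqrt n * C1 * D ^ (-γD - 1 / 2) := by ring
          _ ≤ Real.sqrt n * C1 * (c0 * P) ^ (-(γD + 1 / 2)) := by
              apply mul_le_mul_of_nonneg_left hb2 (by positivity)
          _ ≤ Real.sqrt n * C1 * ((4 / c0) ^ (γD + 1 / 2) *
              (1 + r ^ (ν1 / (2 - ν1)) * |t|) ^ (-((γD + 1 / 2) * (2 - ν1)))) := by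
              apply mul_le_mul_of_nonneg_left hb3 (by positivity)
          _ = Real.sqrt n * C1 * (4 / c0) ^ (γD + 1 / 2) *
              (1 + r ^ (ν1 / (2 - ν1)) * |t|) ^ (-((γD + 1 / 2) * (2 - ν1))) := by ring
      have hterm2 : |Vl (x + w)| * ‖(fderiv ℝ g (L x)).comp L‖ ≤
          C0 * M * (4 / c0) ^ γD * 2 / lam * r ^ (ν2 / (2 - ν2) - 1) *
            (1 + r ^ (ν2 / (2 - ν2)) * |t|) ^ (-(γD * (2 - ν2)) - 1) := by
        have e1' : |Vl (x + w)| * ‖(fderiv ℝ g (L x)).comp L‖ ≤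
            (C0 * D ^ (-γD)) * (M * c⁻¹) :=
          mul_le_mul hVbnd hb6 (norm_nonneg _) (by positivity)
        have e2 : (C0 * D ^ (-γD)) * (M * c⁻¹) ≤
            (C0 * ((4 / c0) ^ γD * (1 + r ^ b * |t|) ^ (-(γD * (2 - ν2))))) *
            (M * (lam⁻¹ * (2 * r ^ (b - 1) * (1 + r ^ b * |t|)⁻¹))) := by
          apply mul_le_mul
          · apply mul_le_mul_of_nonneg_left (hb4.trans hb5) hC0.le
          · rw [hcinv]
            apply mul_le_mul_of_nonneg_left
              (mul_le_mul_of_nonneg_left hrtinv (inv_nonneg.mpr hlam0.le)) hM0.le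
          · positivity
          · have := Real.rpow_nonneg (le_of_lt (show (0:ℝ) < 4 / c0 from h4c0)) γD
            positivity
        have e3 : (C0 * ((4 / c0) ^ γD * (1 + r ^ b * |t|) ^ (-(γD * (2 - ν2))))) *
            (M * (lam⁻¹ * (2 * r ^ (b - 1) * (1 + r ^ b * |t|)⁻¹))) =
            C0 * M * (4 / c0) ^ γD * 2 / lam * r ^ (b - 1) *
              (1 + r ^ b * |t|) ^ (-(γD * (2 - ν2)) - 1) := by
          rw [show (1 + r ^ b * |t|) ^ (-(γD * (2 - ν2)) - 1) =
              (1 + r ^ b * |t|) ^ (-(γD * (2 - ν2))) * (1 + r ^ b * |t|) ^ (-(1:ℝ)) from by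
            rw [← Real.rpow_add hX2pos]; ring_nf,
            Real.rpow_neg_one]
          field_simp
        calc |Vl (x + w)| * ‖(fderiv ℝ g (L x)).comp L‖ ≤ _ := e1'.trans e2
          _ = C0 * M * (4 / c0) ^ γD * 2 / lam * r ^ (ν2 / (2 - ν2) - 1) *
              (1 + r ^ (ν2 / (2 - ν2)) * |t|) ^ (-(γD * (2 - ν2)) - 1) := e3
      calc ‖Vl (x + w) • ((fderiv ℝ g (L x)).comp L) +
            g (L x) • ((fderiv ℝ Vl (x + w)).comp
              (ContinuousLinearMap.id ℝ (EuclideanSpace ℝ (Fin n))))‖ ≤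
          ‖Vl (x + w) • ((fderiv ℝ g (L x)).comp L)‖ +
            ‖g (L x) • ((fderiv ℝ Vl (x + w)).comp
              (ContinuousLinearMap.id ℝ (EuclideanSpace ℝ (Fin n))))‖ := norm_add_le _ _
        _ = |Vl (x + w)| * ‖(fderiv ℝ g (L x)).comp L‖ +
            |g (L x)| * ‖(fderiv ℝ Vl (x + w)).comp
              (ContinuousLinearMap.id ℝ (EuclideanSpace ℝ (Fin n)))‖ := by
            have h1 : ‖Vl (x + w) • ((fderiv ℝ g (L x)).comp L)‖ =
                |Vl (x + w)| * ‖(fderiv ℝ g (L x)).comp L‖ :=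
              norm_smul (β := EuclideanSpace ℝ (Fin n) →L[ℝ] ℝ) _ _
            have h2 : ‖g (L x) • ((fderiv ℝ Vl (x + w)).comp
                (ContinuousLinearMap.id ℝ (EuclideanSpace ℝ (Fin n))))‖ =
                |g (L x)| * ‖(fderiv ℝ Vl (x + w)).comp
                  (ContinuousLinearMap.id ℝ (EuclideanSpace ℝ (Fin n)))‖ :=
              norm_smul (β := EuclideanSpace ℝ (Fin n) →L[ℝ] ℝ) _ _
            rw [h1, h2]
        _ ≤ C0 * M * (4 / c0) ^ γD * 2 / lam * r ^ (ν2 / (2 - ν2) - 1) *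
              (1 + r ^ (ν2 / (2 - ν2)) * |t|) ^ (-(γD * (2 - ν2)) - 1) +
            Real.sqrt n * C1 * (4 / c0) ^ (γD + 1 / 2) *
              (1 + r ^ (ν1 / (2 - ν1)) * |t|) ^ (-((γD + 1 / 2) * (2 - ν1))) :=
            add_le_add hterm2 hterm1
        _ = _ := by ring
    · -- outside the cut-off : everything vanishes
      have hgz : g (L x) = 0 := hg4 _ hx4.le
      have hdgz : fderiv ℝ g (L x) = 0 := by
        have hopen : IsOpen {y : EuclideanSpace ℝ (Fin n) | 4 < ‖y‖} :=
          isOpen_lt continuous_const continuous_norm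
        have hev : g =ᶠ[nhds (L x)] fun _ => (0:ℝ) := by
          filter_upwards [hopen.mem_nhds hx4] with y hy
          exact hg4 y (le_of_lt hy)
        rw [hev.fderiv_eq]
        exact fderiv_const_apply 0
      rw [hgz, hdgz]
      simp only [ContinuousLinearMap.zero_comp, smul_zero, zero_smul, add_zero, norm_zero]
      positivity
  -- conclude via the sup
  rw [gradSup]
  exact Real.iSup_le hkey (by positivity)
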